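/- For every q ∈ ℂ with |q| < 1, the identity 2·(∑_{n∈ℤ} q^{(2n+1)²})² = (∑_{n∈ℤ} q^{2n²})² − (∑_{n∈ℤ} (−1)ⁿ q^{2n²})² holds. (Equivalently, 2·θ₂(q⁸)² = θ₃(q⁴)² − θ₄(q⁴)², the double-argument formula for theta constants.) -/

import Mathlib

/-!
Expanding the squares as double series,
`θ₃(q⁴)² − θ₄(q⁴)² = ∑_{m,n} (1 − (−1)^{m+n}) q^{2m² + 2n²}`, so only the pairs with `m + n`
odd survive, each with weight `2`. These pairs are exactly
`(a + b + 1, a − b)` for `(a, b) ∈ ℤ²`, and `2(a + b + 1)² + 2(a − b)² = (2a + 1)² + (2b + 1)²`,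
which turns the surviving double series into `2 θ₂(q⁸)²`.
-/

lemma zpow_add_of_nonneg₀ {G₀ : Type*} [GroupWithZero G₀] (a : G₀) {m n : ℤ} (hm : 0 ≤ m)
    (hn : 0 ≤ n) : a ^ (m + n) = a ^ m * a ^ n := by
  lift m to ℕ using hm
  lift n to ℕ using hn
  rw [← Nat.cast_add, zpow_natCast, zpow_natCast, zpow_natCast, pow_add]

lemma zpow_mul_zpow_eq_of_add_eq {G₀ : Type*} [GroupWithZero G₀] (a : G₀) {m n m' n' : ℤ}
    (hm : 0 ≤ m) (hn : 0 ≤ n) (hm' : 0 ≤ m') (hn' : 0 ≤ n') (h : m + n = m' + n') :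
    a ^ m * a ^ n = a ^ m' * a ^ n' := by
  rw [← zpow_add_of_nonneg₀ a hm hn, ← zpow_add_of_nonneg₀ a hm' hn', h]

lemma summable_norm_zpow_of_abs_le {𝕜 : Type*} [NormedDivisionRing 𝕜] {q : 𝕜} (hq : ‖q‖ < 1)
    {f : ℤ → ℤ} (hf : ∀ n, |n| ≤ f n) : Summable fun n => ‖q ^ f n‖ := by
  have h_geom := summable_geometric_of_lt_one (norm_nonneg q) hq
  have h_geom_int : Summable fun n : ℤ => ‖q‖ ^ n.natAbs :=
    .of_nat_of_neg (by simpa using h_geom) (by simpa using h_geom)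
  refine h_geom_int.of_nonneg_of_le (fun _ => norm_nonneg _) fun n => ?_
  have hfn : ((f n).toNat : ℤ) = f n := Int.toNat_of_nonneg ((abs_nonneg n).trans (hf n))
  have h_natAbs : n.natAbs ≤ (f n).toNat := by
    have := hf n
    have := Int.natCast_natAbs n
    omega
  rw [← hfn, zpow_natCast, norm_pow]
  exact pow_le_pow_of_le_one (norm_nonneg q) hq.le h_natAbs

lemma tsum_eq_tsum_of_support_odd {M : Type*} [AddCommMonoid M] [TopologicalSpace M]
    (F : ℤ × ℤ → M) (hF : ∀ m n, Even (m + n) → F (m, n) = 0) :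
    ∑' p, F p = ∑' p : ℤ × ℤ, F (p.1 + p.2 + 1, p.1 - p.2) := by
  refine (Function.Injective.tsum_eq (g := fun p : ℤ × ℤ => (p.1 + p.2 + 1, p.1 - p.2))
    ?_ ?_).symm
  · rintro ⟨a, b⟩ ⟨a', b'⟩ h
    simp only [Prod.mk.injEq] at h ⊢
    omega
  · rintro ⟨m, n⟩ hmn
    obtain ⟨k, hk⟩ := Int.not_even_iff_odd.1 fun h => hmn (hF m n h)
    exact ⟨(k, m - k - 1), by simp only [Prod.mk.injEq]; omega⟩

/-- the double-argument formula `2·θ₂(q⁸)² = θ₃(q⁴)² − θ₄(q⁴)²`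
written out as `q`-series. -/
theorem theta_double_argument_difference (q : ℂ) (hq : ‖q‖ < 1) :
    2 * (∑' n : ℤ, q ^ ((2 * n + 1) ^ 2)) ^ 2 =
      (∑' n : ℤ, q ^ (2 * n ^ 2)) ^ 2 - (∑' n : ℤ, (-1 : ℂ) ^ n * q ^ (2 * n ^ 2)) ^ 2 := by
  have h_odd : Summable fun n : ℤ => ‖q ^ ((2 * n + 1) ^ 2)‖ :=
    summable_norm_zpow_of_abs_le hq fun n => by cases abs_cases n <;> nlinarith
  have h_even : Summable fun n : ℤ => ‖q ^ (2 * n ^ 2)‖ :=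
    summable_norm_zpow_of_abs_le hq fun n => by
      nlinarith [Int.natCast_natAbs n ▸ Int.natAbs_le_self_sq n, sq_nonneg n]
  have h_sign : Summable fun n : ℤ => ‖(-1 : ℂ) ^ n * q ^ (2 * n ^ 2)‖ := by
    simpa only [norm_mul, norm_zpow, norm_neg, norm_one, one_zpow, one_mul] using h_even
  calc 2 * (∑' n : ℤ, q ^ ((2 * n + 1) ^ 2)) ^ 2
      = ∑' p : ℤ × ℤ, 2 * (q ^ ((2 * p.1 + 1) ^ 2) * q ^ ((2 * p.2 + 1) ^ 2)) := by
        rw [sq, tsum_mul_tsum_of_summable_norm h_odd h_odd, tsum_mul_left]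
    _ = ∑' p : ℤ × ℤ, (1 - (-1) ^ (p.1 + p.2)) * (q ^ (2 * p.1 ^ 2) * q ^ (2 * p.2 ^ 2)) := by
        refine .trans (tsum_congr fun ⟨a, b⟩ => ?_)
          (tsum_eq_tsum_of_support_odd _ fun m n hmn => by simp [hmn.neg_one_zpow]).symm
        dsimp only
        rw [Odd.neg_one_zpow ⟨a, by ring⟩, zpow_mul_zpow_eq_of_add_eq q (by positivity)
          (by positivity) (by positivity) (by positivity)
          (show 2 * (a + b + 1) ^ 2 + 2 * (a - b) ^ 2 = (2 * a + 1) ^ 2 + (2 * b + 1) ^ 2 by ring)]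
        norm_num
    _ = (∑' n : ℤ, q ^ (2 * n ^ 2)) ^ 2 - (∑' n : ℤ, (-1 : ℂ) ^ n * q ^ (2 * n ^ 2)) ^ 2 := by
        rw [sq, sq, tsum_mul_tsum_of_summable_norm h_even h_even,
          tsum_mul_tsum_of_summable_norm h_sign h_sign,
          ← (summable_mul_of_summable_norm h_even h_even).tsum_sub
            (summable_mul_of_summable_norm h_sign h_sign)]
        refine tsum_congr fun p => ?_
        rw [zpow_add₀ (by norm_num : (-1 : ℂ) ≠ 0)]
        ring
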